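/- Let M be a matroid of rank n on S = {1,…,d}, represented over K = ℝ or ℂ with kernel Z = ker R of dimension b, and equip E* with the inner product making (e*_i) orthogonal with ||e*_i||² = x_i. Let X be the determinantal random subset of S associated with the orthogonal projection onto im D (D the transpose of R). Then for any fixed basis 𝒵 of Z and any basis T of M, P(X = T) is proportional to |det(𝒵/𝒵_T)|² · Π_{i∈T} x_i, with normalizing constant Σ_{T basis} |det(𝒵/𝒵_T)|² x^T = (Π_{i∈S} x_i) · ||J_x γ_1 ∧ … ∧ J_x γ_b||², where 𝒵 = (γ_1,…,γ_b) and J_x : e_i ↦ x_i^{−1} e*_i. -/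

import Mathlib

/-! Framework: a linear matroid on a finite linearly ordered set `S`, represented over
`ℝ` by `R : E → F` with `E = S → ℝ`, kernel `Z = ker R`; `E* = S → ℝ` carries the
inner product with `‖e*_i‖² = x_i`; `im D = (J_x Z)^⊥` is the annihilator of `Z`. -/

section Matroid

variable {S : Type*} [Fintype S] [DecidableEq S] [LinearOrder S]
  {F : Type*} [AddCommGroup F] [Module ℝ F]

/-- The `x`-weighted inner product on `E* = S → ℝ`. -/
def innerx (x : S → ℝ) (α β : S → ℝ) : ℝ := ∑ i, x i * α i * β i

/-- `T` is a basis of the matroid represented by `R`. -/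
def IsMBasis (R : (S → ℝ) →ₗ[ℝ] F) (T : Finset S) : Prop :=
  T.card = Module.finrank ℝ (LinearMap.range R) ∧
  LinearIndependent ℝ (fun i : T => R (Pi.single (i : S) 1))

/-- The annihilator `{α | Σ_i α_i c_i = 0 for all c ∈ ker R}`; in the `x`-weighted
inner product this is `(J_x Z)^⊥ = im D = (ker D*)^⊥`, since
`⟨J_x c, α⟩_x = Σ_i c_i α_i`. -/
def annih (R : (S → ℝ) →ₗ[ℝ] F) : Submodule ℝ (S → ℝ) where
  carrier := {α | ∀ c, R c = 0 → ∑ i, α i * c i = 0}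
  add_mem' := fun ha hb c hc => by
    simp [add_mul, Finset.sum_add_distrib, ha c hc, hb c hc]
  zero_mem' := fun c hc => by simp
  smul_mem' := fun r α hα c hc => by
    have h : ∑ i, r * α i * c i = r * ∑ i, α i * c i := by
      rw [Finset.mul_sum]
      exact Finset.sum_congr rfl fun i _ => by ring
    simpa [h] using congrArg (r * ·) (hα c hc)

/-- The change-of-basis determinant `det(𝒵/𝒵_T)` between a basis `γ` of `Z = ker R`
and the fundamental basis associated with `T` (the matrix of coordinates of the `γᵢ`
outside `T`, in the fixed order). -/
noncomputable def cbDet {n : ℕ} (γ : Fin n → (S → ℝ)) (T : Finset S) : ℝ :=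
  if h : ((Tᶜ : Finset S).sort (· ≤ ·)).length = n then
    Matrix.det (Matrix.of fun i j : Fin n =>
      γ j (((Tᶜ : Finset S).sort (· ≤ ·)).get (Fin.cast h.symm i)))
  else 0

end Matroid

/-! With `Γ` the matrix of rows `γ_a` and `W = diag(x)⁻¹` (the map `J_x`), the `x`-orthogonal
projection onto the annihilator of `Z = span γ` is `P = 1 - W Γᵀ G⁻¹ Γ`, where `G = Γ W Γᵀ` is the
weighted Gram matrix of `γ`. Conjugating by `diag(√x)` does not change principal minors, and by
the Weinstein–Aronszajn identity the minor on `T` is `det(G - Γ_T W_T Γ_Tᵀ) / det G`. The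
numerator is the Gram matrix `Γ_{Tᶜ} W_{Tᶜ} Γ_{Tᶜ}ᵀ` of the coordinates outside `T`; as
`|Tᶜ| = dim Z` it is a product of square matrices, with determinant `det(𝒵/𝒵_T)² / x^{Tᶜ}`. -/

open Matrix

section Weighted

variable {S : Type*} [Fintype S] {x : S → ℝ}

lemma eq_zero_of_innerx_self_eq_zero (hx : ∀ i, 0 < x i) {β : S → ℝ}
    (h : innerx x β β = 0) : β = 0 := by
  have hnonneg : ∀ i ∈ Finset.univ, 0 ≤ x i * β i * β i := fun i _ => by
    rw [mul_assoc]; exact mul_nonneg (hx i).le (mul_self_nonneg _)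
  funext i
  have hi := (Finset.sum_eq_zero_iff_of_nonneg hnonneg).mp h i (Finset.mem_univ i)
  simpa [mul_assoc, (hx i).ne'] using hi

variable {ι : Type*} [Fintype ι]

lemma annih_eq_ker_mulVecLin {F : Type*} [AddCommGroup F] [Module ℝ F]
    {R : (S → ℝ) →ₗ[ℝ] F} {γ : ι → S → ℝ}
    (hγ : Submodule.span ℝ (Set.range γ) = LinearMap.ker R) :
    annih R = LinearMap.ker (of γ).mulVecLin := by
  ext α
  change (∀ c, R c = 0 → α ⬝ᵥ c = 0) ↔ of γ *ᵥ α = 0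
  constructor
  · intro h
    funext a
    have hγa : R (γ a) = 0 := by
      rw [← LinearMap.mem_ker, ← hγ]; exact Submodule.subset_span ⟨a, rfl⟩
    simpa [mulVec, dotProduct_comm] using h (γ a) hγa
  · intro h c hc
    obtain ⟨u, rfl⟩ : c ∈ LinearMap.range (of γ).vecMulLinear := by
      rw [range_vecMulLinear]; exact hγ ▸ hc
    rw [vecMulLinear_apply, dotProduct_comm, ← dotProduct_mulVec, h, dotProduct_zero]

variable [DecidableEq S]

lemma innerx_diagonal_inv_mulVec (hx : ∀ i, x i ≠ 0) (c β : S → ℝ) :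
    innerx x (diagonal x⁻¹ *ᵥ c) β = c ⬝ᵥ β := by
  simp only [innerx, mulVec_diagonal, dotProduct, Pi.inv_apply, ← mul_assoc,
    mul_inv_cancel₀ (hx _), one_mul]

lemma posDef_mul_diagonal_mul_transpose {Γ : Matrix ι S ℝ} (hΓ : LinearIndependent ℝ Γ.row)
    (hx : ∀ i, 0 < x i) : (Γ * diagonal x * Γᵀ).PosDef := by
  simpa using (PosDef.diagonal hx).mul_mul_conjTranspose_same (vecMul_injective_iff.mpr hΓ)

variable {P : (S → ℝ) →ₗ[ℝ] (S → ℝ)}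

lemma map_diagonal_inv_mulVec_vecMul_eq_zero (hx : ∀ i, 0 < x i) (hP1 : ∀ α, P (P α) = P α)
    (hP2 : ∀ α β, innerx x (P α) β = innerx x α (P β)) {Γ : Matrix ι S ℝ}
    (hΓ : ∀ α, Γ *ᵥ P α = 0) (v : ι → ℝ) :
    P (diagonal x⁻¹ *ᵥ (v ᵥ* Γ)) = 0 := by
  apply eq_zero_of_innerx_self_eq_zero hx
  rw [hP2, hP1, innerx_diagonal_inv_mulVec (fun i => (hx i).ne'), ← dotProduct_mulVec, hΓ,
    dotProduct_zero]

lemma toMatrix'_eq_one_sub [DecidableEq ι] (hx : ∀ i, 0 < x i) (hP1 : ∀ α, P (P α) = P α)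
    (hP2 : ∀ α β, innerx x (P α) β = innerx x α (P β)) {Γ : Matrix ι S ℝ}
    (hP3 : LinearMap.range P = LinearMap.ker Γ.mulVecLin)
    (hG : IsUnit (Γ * diagonal x⁻¹ * Γᵀ).det) :
    LinearMap.toMatrix' P = 1 - diagonal x⁻¹ * Γᵀ * (Γ * diagonal x⁻¹ * Γᵀ)⁻¹ * Γ := by
  set G := Γ * diagonal x⁻¹ * Γᵀ
  set Q := diagonal x⁻¹ * Γᵀ * G⁻¹ * Γ
  suffices h : ∀ α, P α = α - Q *ᵥ α by
    rw [← LinearMap.toMatrix'_toLin' (1 - Q)]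
    congr 1
    refine LinearMap.ext fun α => ?_
    rw [h, Matrix.toLin'_apply, sub_mulVec, one_mulVec]
  have hΓ : ∀ α, Γ *ᵥ P α = 0 := fun α =>
    LinearMap.mem_ker.mp (hP3 ▸ LinearMap.mem_range_self P α)
  intro α
  have hQ : Q *ᵥ α = diagonal x⁻¹ *ᵥ ((G⁻¹ *ᵥ (Γ *ᵥ α)) ᵥ* Γ) := by
    simp only [Q, ← mulVec_transpose, mulVec_mulVec, Matrix.mul_assoc]
  have hker : Γ *ᵥ (α - Q *ᵥ α) = 0 := by
    rw [mulVec_sub, mulVec_mulVec, sub_eq_zero]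
    simp only [Q, ← Matrix.mul_assoc]
    rw [show Γ * diagonal x⁻¹ * Γᵀ = G from rfl, mul_nonsing_inv G hG, Matrix.one_mul]
  obtain ⟨β, hβ⟩ : α - Q *ᵥ α ∈ LinearMap.range P := hP3 ▸ hker
  calc P α = P (α - Q *ᵥ α) + P (Q *ᵥ α) := by rw [← map_add, sub_add_cancel]
    _ = α - Q *ᵥ α := by
      rw [← hβ, hP1, hQ, map_diagonal_inv_mulVec_vecMul_eq_zero hx hP1 hP2 hΓ, add_zero]

end Weighted

section Determinants

variable {K : Type*} [Field K] {n : Type*} [Fintype n] [DecidableEq n]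

lemma det_of_div_mul {d : n → K} (hd : ∀ i, d i ≠ 0) (M : Matrix n n K) :
    det (of fun i j => d i / d j * M i j) = det M := by
  calc det (of fun i j => d i / d j * M i j)
      = (∏ i, d i) * det (of fun i j => (d j)⁻¹ * M i j) := by
        rw [← det_mul_column]; simp only [of_apply, div_eq_mul_inv, mul_assoc]
    _ = det M := by
      rw [det_mul_row, Finset.prod_inv_distrib,
        mul_inv_cancel_left₀ (Finset.prod_ne_zero_iff.2 fun i _ => hd i)]

lemma det_mul_diagonal_mul_transpose {κ : Type*} [Fintype κ] [DecidableEq κ] (A : Matrix n κ K)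
    (w : κ → K) (e : n ≃ κ) :
    det (A * diagonal w * Aᵀ) = det (A.submatrix id e) ^ 2 * ∏ k, w k := by
  have h : A * diagonal w * Aᵀ =
      A.submatrix id e * diagonal (w ∘ e) * (A.submatrix id e)ᵀ := by
    ext i j
    rw [mul_apply, mul_apply]
    simp only [mul_diagonal, transpose_apply, submatrix_apply, id, Function.comp_apply]
    exact (e.sum_comp fun k => A i k * w k * A j k).symm
  rw [h, det_mul, det_mul, det_diagonal, det_transpose, Function.comp_def, e.prod_comp w]
  ring

variable {ι S : Type*} [Fintype S] [DecidableEq S]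

lemma mul_diagonal_mul_transpose_sub_submatrix (Γ : Matrix ι S K) (w : S → K)
    (T : Finset S) :
    Γ * diagonal w * Γᵀ - Γ.submatrix id ((↑) : T → S) * diagonal (w ∘ ((↑) : T → S)) *
        (Γ.submatrix id ((↑) : T → S))ᵀ =
      Γ.submatrix id ((↑) : ↥Tᶜ → S) * diagonal (w ∘ ((↑) : ↥Tᶜ → S)) *
        (Γ.submatrix id ((↑) : ↥Tᶜ → S))ᵀ := by
  rw [sub_eq_iff_eq_add']
  ext a c
  rw [Matrix.add_apply, mul_apply, mul_apply, mul_apply]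
  simp only [mul_diagonal, transpose_apply, submatrix_apply, id, Function.comp_apply]
  rw [Finset.sum_coe_sort T fun i => Γ a i * w i * Γ c i,
    Finset.sum_coe_sort Tᶜ fun i => Γ a i * w i * Γ c i, Finset.sum_add_sum_compl]

variable [Fintype ι] [DecidableEq ι]

lemma det_one_sub_mul_inv_mul {G : Matrix ι ι K} (hG : IsUnit G.det) (A : Matrix n ι K)
    (B : Matrix ι n K) : det (1 - A * G⁻¹ * B) = det (G - B * A) / det G := by
  rw [sub_eq_add_neg G, ← Matrix.neg_mul, det_add_mul _ _ hG, Matrix.mul_neg, ← sub_eq_add_neg,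
    mul_div_cancel_left₀ _ hG.ne_zero]

lemma det_submatrix_one_sub (Γ : Matrix ι S K) (w : S → K) {f : n → S}
    (hf : Function.Injective f) (hG : IsUnit (Γ * diagonal w * Γᵀ).det) :
    det ((1 - diagonal w * Γᵀ * (Γ * diagonal w * Γᵀ)⁻¹ * Γ : Matrix S S K).submatrix f f) =
      det (Γ * diagonal w * Γᵀ -
          Γ.submatrix id f * diagonal (w ∘ f) * (Γ.submatrix id f)ᵀ) /
        det (Γ * diagonal w * Γᵀ) := by
  have hrows : (diagonal w * Γᵀ).submatrix f id =
      diagonal (w ∘ f) * (Γ.submatrix id f)ᵀ := by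
    ext i a
    simp only [submatrix_apply, diagonal_mul, transpose_apply, id, Function.comp_apply]
  simp only [submatrix_sub, Pi.sub_apply]
  rw [submatrix_one f hf, submatrix_mul _ _ _ _ _ Function.bijective_id,
    submatrix_mul _ _ _ _ _ Function.bijective_id, submatrix_id_id, hrows, det_one_sub_mul_inv_mul hG,
    Matrix.mul_assoc (Γ.submatrix id f)]

end Determinants

lemma cbDet_eq_det_submatrix {S : Type*} [Fintype S] [DecidableEq S] [LinearOrder S] {n : ℕ}
    (γ : Fin n → S → ℝ) {T : Finset S} (h : Tᶜ.card = n) :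
    cbDet γ T = det ((of γ).submatrix id (Subtype.val ∘ Tᶜ.orderIsoOfFin h)) := by
  rw [cbDet, dif_pos (by rw [Finset.length_sort, h]), ← det_transpose]
  rfl

open Classical

/-- Here `P(X = T)` is the principal minor on `T` of the kernel
`K(i,j) = √x_i/√x_j · (P e*_j)_i`, and `‖J_xγ₁ ∧ … ∧ J_xγ_b‖²` is the Gram determinant
`det(⟨J_xγ_a, J_xγ_c⟩_x) = det(Σ_i x_i⁻¹ γ_a(i) γ_c(i))`. -/
theorem determinantal_density_matroid_bases
    {S : Type*} [Fintype S] [DecidableEq S] [LinearOrder S]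
    {F : Type*} [AddCommGroup F] [Module ℝ F]
    (x : S → ℝ) (hx : ∀ i, 0 < x i)
    (R : (S → ℝ) →ₗ[ℝ] F)
    (b : ℕ) (hb : Module.finrank ℝ (LinearMap.ker R) = b)
    -- a basis `𝒵` of `Z = ker R`
    (γ : Fin b → (S → ℝ))
    (hγ_indep : LinearIndependent ℝ γ)
    (hγ_span : Submodule.span ℝ (Set.range γ) = LinearMap.ker R)
    -- `P`, the `x`-orthogonal projection onto `im D = annih R`
    (P : (S → ℝ) →ₗ[ℝ] (S → ℝ))
    (hP1 : ∀ α, P (P α) = P α)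
    (hP2 : ∀ α β, innerx x (P α) β = innerx x α (P β))
    (hP3 : LinearMap.range P = annih R) :
    ∀ T : Finset S, IsMBasis R T →
      Matrix.det (Matrix.of fun i j : T =>
          Real.sqrt (x i) / Real.sqrt (x j) * P (Pi.single (j : S) 1) i) =
        (cbDet γ T) ^ 2 * (∏ i ∈ T, x i) /
          ((∏ i : S, x i) *
            Matrix.det (Matrix.of fun a c : Fin b =>
              ∑ i : S, (x i)⁻¹ * γ a i * γ c i)) := by
  intro T hT
  have hTc : Tᶜ.card = b := by
    have h := LinearMap.finrank_range_add_finrank_ker R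
    rw [Module.finrank_fintype_fun_eq_card, hb, ← hT.1] at h
    rw [Finset.card_compl]
    omega
  have hG : 0 < (of γ * diagonal x⁻¹ * (of γ)ᵀ).det :=
    (posDef_mul_diagonal_mul_transpose hγ_indep fun i => inv_pos.2 (hx i)).det_pos
  have hP := toMatrix'_eq_one_sub hx hP1 hP2 (hP3.trans (annih_eq_ker_mulVecLin hγ_span))
    hG.ne'.isUnit
  have hK := det_of_div_mul (fun i : T => (Real.sqrt_pos.2 (hx i)).ne')
    ((LinearMap.toMatrix' P).submatrix ((↑) : T → S) (↑))
  have hgram : (of fun a c : Fin b => ∑ i, (x i)⁻¹ * γ a i * γ c i) =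
      of γ * diagonal x⁻¹ * (of γ)ᵀ := by
    ext a c
    rw [of_apply, mul_apply]
    refine Finset.sum_congr rfl fun i _ => ?_
    simp only [mul_diagonal, of_apply, transpose_apply, Pi.inv_apply]
    ring
  simp only [submatrix_apply, LinearMap.toMatrix'_apply] at hK
  rw [hK, hP, det_submatrix_one_sub _ _ Subtype.val_injective hG.ne'.isUnit,
    mul_diagonal_mul_transpose_sub_submatrix,
    det_mul_diagonal_mul_transpose _ _ (Tᶜ.orderIsoOfFin hTc).toEquiv, submatrix_submatrix,
    Function.id_comp, RelIso.coe_fn_toEquiv, ← cbDet_eq_det_submatrix, hgram,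
    ← Finset.prod_mul_prod_compl T x]
  have hprod : ∏ k : ↥Tᶜ, (x⁻¹ ∘ Subtype.val) k = (∏ i ∈ Tᶜ, x i)⁻¹ := by
    rw [← Finset.prod_inv_distrib]
    exact Finset.prod_coe_sort Tᶜ x⁻¹
  have hxT : ∏ i ∈ T, x i ≠ 0 := Finset.prod_ne_zero_iff.2 fun i _ => (hx i).ne'
  rw [hprod]
  field_simp
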